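/- Let ψ: ℕ → [0,1/2) be a function. Let x₁ ∈ Exact(1,ψ) and set Q(x₁) := {q ∈ ℕ : ‖q x₁‖ < ψ(q)}. If x₂ ∈ [0,1] is such that there are infinitely many q ∈ Q(x₁) for which there exists an integer p with gcd(p,q) = 1 and |q x₂ − p| < ψ(q), then (x₁,x₂) ∈ Exact(2,ψ). -/
import Mathlib


open Set Filter MeasureTheory

/-- Distance from `x` to the nearest integer. -/
noncomputable def nint (x : ℝ) : ℝ := ⨅ m : ℤ, |x - (m : ℝ)|

/-- The `ψ`-simultaneously-well approximable set `W(n, ψ)`. -/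
def Wset (n : ℕ) (ψ : ℕ → ℝ) : Set (Fin n → ℝ) :=
  {x | (∀ i, x i ∈ Set.Icc (0 : ℝ) 1) ∧
    {q : ℕ | ∀ i, nint (q * x i) < ψ q}.Infinite}

/-- The exact `ψ`-simultaneously-well approximable set `Exact(n, ψ)`. -/
def ExactSet (n : ℕ) (ψ : ℕ → ℝ) : Set (Fin n → ℝ) :=
  Wset n ψ \ ⋃ c ∈ Set.Ioo (0 : ℝ) 1, Wset n (fun q => c * ψ q)

lemma nint_le (x : ℝ) (m : ℤ) : nint x ≤ |x - m| := by
  apply ciInf_le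
  exact ⟨0, fun y ⟨k, hk⟩ => hk ▸ abs_nonneg _⟩

theorem mem_exact_two (ψ : ℕ → ℝ) (hψ : ∀ q, ψ q ∈ Set.Ico (0 : ℝ) (1 / 2))
    (x₁ x₂ : ℝ) (hx₁ : ![x₁] ∈ ExactSet 1 ψ) (hx₂ : x₂ ∈ Set.Icc (0 : ℝ) 1)
    (h : {q : ℕ | nint (q * x₁) < ψ q ∧
        ∃ p : ℤ, Int.gcd p q = 1 ∧ |q * x₂ - p| < ψ q}.Infinite) :
    ![x₁, x₂] ∈ ExactSet 2 ψ := by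
  obtain ⟨⟨hIcc1, _⟩, hnot1⟩ := hx₁
  constructor
  · refine ⟨?_, h.mono ?_⟩
    · intro i
      fin_cases i
      · simpa using hIcc1 0
      · simpa using hx₂
    · rintro q ⟨hq1, p, -, hq2⟩ i
      fin_cases i
      · simpa using hq1
      · simpa using lt_of_le_of_lt (nint_le _ p) hq2
  · intro hmem
    simp only [Set.mem_iUnion] at hmem
    obtain ⟨c, hc, hW⟩ := hmem
    apply hnot1
    simp only [Set.mem_iUnion]
    refine ⟨c, hc, ?_, hW.2.mono ?_⟩
    · intro i
      fin_cases i
      simpa using hIcc1 0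
    · intro q hq i
      fin_cases i
      simpa using hq 0
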